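/- The function t ↦ P_u(t) = ∑_{i=1}^N (−1)^{i+1}·binom(N,i)·t/(θ_A(i)·t + θ_C(i)) is monotone nondecreasing on [0,1]. (This is the paper's Lemma 4/Lemma 5: under a given cached file set, the asymptotic upper bound of the area spectrum efficiency is an increasing function of each caching probability.) -/

import Mathlib

open MeasureTheory Finset

/-- `θ_A(i) = 1 − 2∫_0^1 (iατ)u/(u^β+iατ) du`. -/
noncomputable def thetaA (β τ α : ℝ) (i : ℕ) : ℝ :=
  1 - 2 * ∫ u in (0 : ℝ)..1, ((i : ℝ) * α * τ) * u / (u ^ β + (i : ℝ) * α * τ)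

/-- `θ_C(i) = 2∫_0^∞ (iατ)u/(u^β+iατ) du`. -/
noncomputable def thetaC (β τ α : ℝ) (i : ℕ) : ℝ :=
  2 * ∫ u in Set.Ioi (0 : ℝ), ((i : ℝ) * α * τ) * u / (u ^ β + (i : ℝ) * α * τ)

/-- The upper-bound successful transmission probability of a cached file stored with caching
probability `t`: `P_u(t) = ∑_{i=1}^N (−1)^{i+1}·binom(N,i)·t/(θ_A(i)·t + θ_C(i))`. -/
noncomputable def Pu (β τ α : ℝ) (N : ℕ) (t : ℝ) : ℝ :=
  ∑ i ∈ Finset.Icc 1 N,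
    (-1 : ℝ) ^ (i + 1) * (N.choose i : ℝ) * t / (thetaA β τ α i * t + thetaC β τ α i)

/-! Put `s = 1 / t` and `D_s = θ_A + s θ_C`, so that the `i`-th summand of `P_u(t)` is
`(-1)^(i+1) binom(N,i) / D_s(i)`. Up to constants, `θ_C` and `θ_A + θ_C` are integrals over `u`
of `i ↦ iατu / (u^β + iατ) = u - u^(β+1) / (u^β + iατ)`, whose forward differences in `i` are
completely monotone; hence so is `Δ D_s` for `s ≥ 1`, and `1 / D_s` is a completely monotone
sequence. The alternating binomial sum of `f` is `f 0 - (-1)^N Δ^N f 0`, so for `s₁ ≥ s₂` one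
writes `1 / D_{s₂} - 1 / D_{s₁} = E G`, where `E = (s₁ - s₂) θ_C` vanishes at `0` and has
completely monotone differences and `G = 1 / (D_{s₁} D_{s₂})` is completely monotone; the Leibniz
rule for `Δ` and induction on `N` give `(-1)^(N+1) Δ^N (E G) 0 ≥ 0`. -/

open fwdDiff

lemma fwdDiff_mul {M R : Type*} [AddCommMonoid M] [Ring R] (h : M) (f g : M → R) :
    Δ_[h] (f * g) = f * Δ_[h] g + Δ_[h] f * fun x => g (x + h) := by
  ext x
  simp only [fwdDiff, Pi.mul_apply, Pi.add_apply]
  noncomm_ring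

/- The bounded-order version is what the inductions proving that products and inverses are
completely monotone run on. -/
def CompletelyMonotoneUpTo (n : ℕ) (f : ℕ → ℝ) : Prop :=
  ∀ k ≤ n, ∀ m, 0 ≤ (-1) ^ k * Δ_[1] ^[k] f m

def CompletelyMonotone (f : ℕ → ℝ) : Prop :=
  ∀ n, CompletelyMonotoneUpTo n f

section UpTo

variable {n : ℕ} {f g : ℕ → ℝ}

lemma CompletelyMonotoneUpTo.nonneg (hf : CompletelyMonotoneUpTo n f) (m : ℕ) : 0 ≤ f m := by
  simpa using hf 0 n.zero_le m

lemma CompletelyMonotoneUpTo.mono {k : ℕ} (hf : CompletelyMonotoneUpTo n f) (hk : k ≤ n) :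
    CompletelyMonotoneUpTo k f :=
  fun j hj => hf j (hj.trans hk)

lemma completelyMonotoneUpTo_zero : CompletelyMonotoneUpTo 0 f ↔ ∀ m, 0 ≤ f m :=
  ⟨CompletelyMonotoneUpTo.nonneg, fun hf k hk m => by simpa [Nat.le_zero.1 hk] using hf m⟩

lemma completelyMonotoneUpTo_succ :
    CompletelyMonotoneUpTo (n + 1) f ↔ (∀ m, 0 ≤ f m) ∧ CompletelyMonotoneUpTo n (-Δ_[1] f) := by
  have hshift (k m : ℕ) :
      (-1) ^ (k + 1) * Δ_[1] ^[k + 1] f m = (-1) ^ k * Δ_[1] ^[k] (-Δ_[1] f) m := by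
    rw [Function.iterate_succ_apply, ← neg_one_smul ℝ (Δ_[1] f), fwdDiff_iter_const_smul]
    simp only [Pi.smul_apply, smul_eq_mul]
    ring
  refine ⟨fun hf => ⟨hf.nonneg, fun k hk m => ?_⟩, fun ⟨h0, hf⟩ k hk m => ?_⟩
  · rw [← hshift]
    exact hf (k + 1) (by omega) m
  · rcases k with _ | k
    · simpa using h0 m
    · rw [hshift]
      exact hf k (by omega) m

namespace CompletelyMonotoneUpTo

lemma add (hf : CompletelyMonotoneUpTo n f) (hg : CompletelyMonotoneUpTo n g) :
    CompletelyMonotoneUpTo n (f + g) := fun k hk m => by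
  rw [fwdDiff_iter_add, Pi.add_apply, mul_add]
  exact add_nonneg (hf k hk m) (hg k hk m)

lemma const_smul {c : ℝ} (hc : 0 ≤ c) (hf : CompletelyMonotoneUpTo n f) :
    CompletelyMonotoneUpTo n (c • f) := fun k hk m => by
  rw [fwdDiff_iter_const_smul, Pi.smul_apply, smul_eq_mul, mul_left_comm]
  exact mul_nonneg hc (hf k hk m)

lemma comp_add_one (hf : CompletelyMonotoneUpTo n f) :
    CompletelyMonotoneUpTo n fun m => f (m + 1) := fun k hk m => by
  rw [fwdDiff_iter_comp_add]
  exact hf k hk (m + 1)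

lemma mul (hf : CompletelyMonotoneUpTo n f) (hg : CompletelyMonotoneUpTo n g) :
    CompletelyMonotoneUpTo n (f * g) := by
  induction n generalizing f g with
  | zero =>
    rw [completelyMonotoneUpTo_zero] at *
    exact fun m => mul_nonneg (hf m) (hg m)
  | succ n ih =>
    have hf' := (completelyMonotoneUpTo_succ.1 hf).2
    have hg' := (completelyMonotoneUpTo_succ.1 hg).2
    refine completelyMonotoneUpTo_succ.2 ⟨fun m => mul_nonneg (hf.nonneg m) (hg.nonneg m), ?_⟩
    have hleibniz : -Δ_[1] (f * g) = f * -Δ_[1] g + -Δ_[1] f * fun m => g (m + 1) := by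
      rw [fwdDiff_mul]
      ring
    rw [hleibniz]
    exact (ih (hf.mono n.le_succ) hg').add (ih hf' (hg.mono n.le_succ).comp_add_one)

lemma inv {E : ℕ → ℝ} (hE : ∀ m, 0 < E m) (hΔE : CompletelyMonotoneUpTo n (Δ_[1] E)) :
    CompletelyMonotoneUpTo n E⁻¹ := by
  induction n with
  | zero => exact completelyMonotoneUpTo_zero.2 fun m => (inv_pos.2 (hE m)).le
  | succ n ih =>
    have hinv := ih (hΔE.mono n.le_succ)
    refine completelyMonotoneUpTo_succ.2 ⟨fun m => (inv_pos.2 (hE m)).le, ?_⟩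
    have hΔinv : -Δ_[1] E⁻¹ = Δ_[1] E * (E⁻¹ * fun m => (E (m + 1))⁻¹) := by
      ext m
      simp only [fwdDiff, Pi.neg_apply, Pi.inv_apply, Pi.mul_apply]
      field_simp [(hE m).ne', (hE (m + 1)).ne']
      ring
    rw [hΔinv]
    exact (hΔE.mono n.le_succ).mul (hinv.mul hinv.comp_add_one)

end CompletelyMonotoneUpTo

end UpTo

namespace CompletelyMonotone

variable {f g : ℕ → ℝ}

lemma nonneg (hf : CompletelyMonotone f) (m : ℕ) : 0 ≤ f m := (hf 0).nonneg m

lemma add (hf : CompletelyMonotone f) (hg : CompletelyMonotone g) : CompletelyMonotone (f + g) :=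
  fun n => (hf n).add (hg n)

lemma const_smul {c : ℝ} (hc : 0 ≤ c) (hf : CompletelyMonotone f) : CompletelyMonotone (c • f) :=
  fun n => (hf n).const_smul hc

lemma comp_add_one (hf : CompletelyMonotone f) : CompletelyMonotone fun m => f (m + 1) :=
  fun n => (hf n).comp_add_one

lemma mul (hf : CompletelyMonotone f) (hg : CompletelyMonotone g) : CompletelyMonotone (f * g) :=
  fun n => (hf n).mul (hg n)

lemma inv {E : ℕ → ℝ} (hE : ∀ m, 0 < E m) (hΔE : CompletelyMonotone (Δ_[1] E)) :
    CompletelyMonotone E⁻¹ :=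
  fun n => (hΔE n).inv hE

lemma neg_fwdDiff (hf : CompletelyMonotone f) : CompletelyMonotone (-Δ_[1] f) :=
  fun n => (completelyMonotoneUpTo_succ.1 (hf (n + 1))).2

lemma neg_one_pow_mul_fwdDiff_iter_le (hf : CompletelyMonotone f) (k m : ℕ) :
    (-1) ^ k * Δ_[1] ^[k] f m ≤ f m := by
  induction k generalizing m with
  | zero => simp
  | succ k ih =>
    have hstep : (-1) ^ (k + 1) * Δ_[1] ^[k + 1] f m
        = (-1) ^ k * Δ_[1] ^[k] f m - (-1) ^ k * Δ_[1] ^[k] f (m + 1) := by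
      rw [Function.iterate_succ_apply', fwdDiff]
      ring
    linarith [ih m, hf k k le_rfl (m + 1)]

end CompletelyMonotone

lemma completelyMonotone_const {c : ℝ} (hc : 0 ≤ c) : CompletelyMonotone fun _ => c := by
  intro n
  induction n generalizing c with
  | zero => exact completelyMonotoneUpTo_zero.2 fun _ => hc
  | succ n ih =>
    refine completelyMonotoneUpTo_succ.2 ⟨fun _ => hc, ?_⟩
    have hΔ : -Δ_[1] (fun _ : ℕ => c) = fun _ => 0 := by ext; simp
    exact hΔ ▸ ih le_rfl

lemma monotone_of_completelyMonotone_fwdDiff {f : ℕ → ℝ} (hf : CompletelyMonotone (Δ_[1] f)) :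
    Monotone f :=
  monotone_nat_of_le_succ fun m => sub_nonneg.1 (hf.nonneg m)

lemma neg_one_pow_mul_fwdDiff_iter_eq_sum (f : ℕ → ℝ) (N : ℕ) :
    (-1) ^ N * Δ_[1] ^[N] f 0 = ∑ k ∈ range (N + 1), (-1) ^ k * (N.choose k : ℝ) * f k := by
  rw [fwdDiff_iter_eq_sum_shift, mul_sum]
  refine sum_congr rfl fun k hk => ?_
  have hN : (-1 : ℝ) ^ N = (-1) ^ (N - k) * (-1) ^ k := by
    rw [← pow_add, Nat.sub_add_cancel (mem_range_succ_iff.1 hk)]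
  have hsq : (-1 : ℝ) ^ (N - k) * (-1) ^ (N - k) = 1 := by
    rw [← mul_pow]
    simp
  rw [hN, zsmul_eq_mul, zero_add, smul_eq_mul, mul_one]
  push_cast
  linear_combination (-1 : ℝ) ^ k * (N.choose k) * f k * hsq

lemma sum_Icc_neg_one_pow_succ_mul_choose_mul (f : ℕ → ℝ) (N : ℕ) :
    ∑ i ∈ Icc 1 N, (-1) ^ (i + 1) * (N.choose i : ℝ) * f i
      = f 0 - (-1) ^ N * Δ_[1] ^[N] f 0 := by
  rw [neg_one_pow_mul_fwdDiff_iter_eq_sum, range_eq_Ico,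
    sum_eq_sum_Ico_succ_bot (Nat.succ_pos N), zero_add, Nat.succ_eq_add_one,
    Ico_add_one_right_eq_Icc]
  simp [pow_succ, sum_neg_distrib]

lemma CompletelyMonotone.sum_Icc_neg_one_pow_succ_mul_choose_mul_nonneg {f : ℕ → ℝ}
    (hf : CompletelyMonotone f) (N : ℕ) :
    0 ≤ ∑ i ∈ Icc 1 N, (-1) ^ (i + 1) * (N.choose i : ℝ) * f i := by
  rw [sum_Icc_neg_one_pow_succ_mul_choose_mul]
  linarith [hf.neg_one_pow_mul_fwdDiff_iter_le N 0]

lemma neg_one_pow_succ_mul_fwdDiff_iter_mul_nonneg {E G : ℕ → ℝ} (hE0 : E 0 = 0)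
    (hE : CompletelyMonotone (Δ_[1] E)) (hG : CompletelyMonotone G) (N : ℕ) :
    0 ≤ (-1) ^ (N + 1) * Δ_[1] ^[N] (E * G) 0 := by
  induction N generalizing G with
  | zero => simp [hE0]
  | succ N ih =>
    have hleibniz :
        Δ_[1] (E * G) = (-1 : ℝ) • (E * -Δ_[1] G) + Δ_[1] E * fun m => G (m + 1) := by
      rw [fwdDiff_mul]
      ext
      simp
    rw [Function.iterate_succ_apply, hleibniz, fwdDiff_iter_add, fwdDiff_iter_const_smul]
    simp only [Pi.add_apply, Pi.smul_apply, smul_eq_mul]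
    linear_combination ih hG.neg_fwdDiff + (hE.mul hG.comp_add_one) N N le_rfl 0

lemma sum_Icc_neg_one_pow_succ_mul_choose_mul_mul_nonneg {E G : ℕ → ℝ} (hE0 : E 0 = 0)
    (hE : CompletelyMonotone (Δ_[1] E)) (hG : CompletelyMonotone G) (N : ℕ) :
    0 ≤ ∑ i ∈ Icc 1 N, (-1) ^ (i + 1) * (N.choose i : ℝ) * (E i * G i) := by
  have hsum := sum_Icc_neg_one_pow_succ_mul_choose_mul (E * G) N
  simp only [Pi.mul_apply, hE0, zero_mul, zero_sub] at hsum
  rw [hsum]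
  linear_combination neg_one_pow_succ_mul_fwdDiff_iter_mul_nonneg hE0 hE hG N

section

variable {A C : ℕ → ℝ} {s : ℝ}

lemma completelyMonotone_fwdDiff_add_smul (hC : CompletelyMonotone (Δ_[1] C))
    (hAC : CompletelyMonotone (Δ_[1] (A + C))) (hs : 1 ≤ s) :
    CompletelyMonotone (Δ_[1] (A + s • C)) := by
  have hsplit : A + s • C = (A + C) + (s - 1) • C := by
    ext
    simp only [Pi.add_apply, Pi.smul_apply, smul_eq_mul]
    ring
  rw [hsplit, fwdDiff_add, fwdDiff_const_smul]
  exact hAC.add (hC.const_smul (by linarith))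

lemma add_smul_pos (hA0 : 0 < A 0) (hC0 : C 0 = 0) (hC : CompletelyMonotone (Δ_[1] C))
    (hAC : CompletelyMonotone (Δ_[1] (A + C))) (hs : 1 ≤ s) (n : ℕ) : 0 < (A + s • C) n :=
  calc 0 < (A + s • C) 0 := by simpa [hC0] using hA0
    _ ≤ (A + s • C) n := monotone_of_completelyMonotone_fwdDiff
          (completelyMonotone_fwdDiff_add_smul hC hAC hs) n.zero_le

lemma completelyMonotone_inv_add_smul (hA0 : 0 < A 0) (hC0 : C 0 = 0)
    (hC : CompletelyMonotone (Δ_[1] C)) (hAC : CompletelyMonotone (Δ_[1] (A + C)))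
    (hs : 1 ≤ s) : CompletelyMonotone (A + s • C)⁻¹ :=
  .inv (add_smul_pos hA0 hC0 hC hAC hs) (completelyMonotone_fwdDiff_add_smul hC hAC hs)

end

lemma div_mul_add_eq_inv {K : Type*} [Field K] {t : K} (ht : t ≠ 0) (a c : K) :
    t / (a * t + c) = (a + t⁻¹ * c)⁻¹ := by
  rw [show a * t + c = t * (a + t⁻¹ * c) by field_simp, div_mul_cancel_left₀ ht]

lemma antitoneOn_sum_Icc_neg_one_pow_succ_mul_choose_mul_inv_add_smul {A C : ℕ → ℝ}
    (hA0 : 0 < A 0) (hC0 : C 0 = 0) (hC : CompletelyMonotone (Δ_[1] C))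
    (hAC : CompletelyMonotone (Δ_[1] (A + C))) (N : ℕ) :
    AntitoneOn (fun s : ℝ => ∑ i ∈ Icc 1 N, (-1) ^ (i + 1) * (N.choose i : ℝ) * (A + s • C)⁻¹ i)
      (Set.Ici 1) := by
  intro s hs s' hs' hss'
  have hdiff (i : ℕ) : (A + s • C)⁻¹ i - (A + s' • C)⁻¹ i
      = ((s' - s) • C) i * ((A + s • C)⁻¹ * (A + s' • C)⁻¹) i := by
    have hpos := add_smul_pos hA0 hC0 hC hAC hs i
    have hpos' := add_smul_pos hA0 hC0 hC hAC hs' i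
    rw [Pi.inv_apply, Pi.inv_apply, inv_sub_inv hpos.ne' hpos'.ne', div_eq_mul_inv, mul_inv]
    simp only [Pi.add_apply, Pi.smul_apply, Pi.mul_apply, Pi.inv_apply, smul_eq_mul]
    ring
  have hΔE : CompletelyMonotone (Δ_[1] ((s' - s) • C)) := by
    rw [fwdDiff_const_smul]
    exact hC.const_smul (sub_nonneg.2 hss')
  rw [← sub_nonneg, ← sum_sub_distrib]
  simp_rw [← mul_sub, hdiff]
  exact sum_Icc_neg_one_pow_succ_mul_choose_mul_mul_nonneg (by simp [hC0]) hΔE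
    ((completelyMonotone_inv_add_smul hA0 hC0 hC hAC hs).mul
      (completelyMonotone_inv_add_smul hA0 hC0 hC hAC hs')) N

theorem monotoneOn_sum_Icc_neg_one_pow_succ_mul_choose_mul_div {A C : ℕ → ℝ} (hA0 : 0 < A 0)
    (hC0 : C 0 = 0) (hC : CompletelyMonotone (Δ_[1] C))
    (hAC : CompletelyMonotone (Δ_[1] (A + C))) (N : ℕ) :
    MonotoneOn (fun t => ∑ i ∈ Icc 1 N, (-1) ^ (i + 1) * (N.choose i : ℝ) * t / (A i * t + C i))
      (Set.Icc 0 1) := by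
  have hsum {t : ℝ} (ht : t ∈ Set.Ioc 0 1) :
      ∑ i ∈ Icc 1 N, (-1) ^ (i + 1) * (N.choose i : ℝ) * t / (A i * t + C i)
        = ∑ i ∈ Icc 1 N, (-1) ^ (i + 1) * (N.choose i : ℝ) * (A + t⁻¹ • C)⁻¹ i :=
    sum_congr rfl fun i _ => by rw [mul_div_assoc, div_mul_add_eq_inv ht.1.ne']; rfl
  have hs {t : ℝ} (ht : t ∈ Set.Ioc 0 1) : 1 ≤ t⁻¹ := (one_le_inv₀ ht.1).2 ht.2
  intro t₁ ht₁ t₂ ht₂ h₁₂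
  obtain rfl | ht₁pos := ht₁.1.eq_or_lt
  · obtain rfl | ht₂pos := ht₂.1.eq_or_lt
    · rfl
    have ht₂' : t₂ ∈ Set.Ioc 0 1 := ⟨ht₂pos, ht₂.2⟩
    simp only [mul_zero, zero_div, sum_const_zero]
    rw [hsum ht₂']
    exact (completelyMonotone_inv_add_smul hA0 hC0 hC hAC (hs ht₂')
      ).sum_Icc_neg_one_pow_succ_mul_choose_mul_nonneg N
  have ht₁' : t₁ ∈ Set.Ioc 0 1 := ⟨ht₁pos, ht₁.2⟩
  have ht₂' : t₂ ∈ Set.Ioc 0 1 := ⟨ht₁pos.trans_le h₁₂, ht₂.2⟩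
  simp only
  rw [hsum ht₁', hsum ht₂']
  exact antitoneOn_sum_Icc_neg_one_pow_succ_mul_choose_mul_inv_add_smul hA0 hC0 hC hAC N
    (hs ht₂') (hs ht₁') (inv_anti₀ ht₁pos h₁₂)

section Integral

variable {X : Type*} [MeasurableSpace X] {μ : Measure X}

lemma fwdDiff_iter_integral {f : ℕ → X → ℝ} (hf : ∀ n, Integrable (f n) μ) (k m : ℕ) :
    Δ_[1] ^[k] (fun n => ∫ u, f n u ∂μ) m = ∫ u, Δ_[1] ^[k] (fun n => f n u) m ∂μ := by
  simp only [fwdDiff_iter_eq_sum_shift, zsmul_eq_mul]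
  rw [integral_finsetSum _ fun i _ => (hf _).const_mul _]
  simp [integral_const_mul]

lemma completelyMonotone_fwdDiff_integral {f : ℕ → X → ℝ} (hf : ∀ n, Integrable (f n) μ)
    (h : ∀ᵐ u ∂μ, CompletelyMonotone (Δ_[1] fun n => f n u)) :
    CompletelyMonotone (Δ_[1] fun n => ∫ u, f n u ∂μ) := by
  intro n k _ m
  rw [← Function.iterate_succ_apply, fwdDiff_iter_integral hf, ← integral_const_mul]
  refine integral_nonneg_of_ae (h.mono fun u hu => ?_)
  have := hu k k le_rfl m
  rwa [← Function.iterate_succ_apply] at this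

end Integral

lemma completelyMonotone_fwdDiff_mul_div_add {a c : ℝ} (ha : 0 < a) (hc : 0 ≤ c) :
    CompletelyMonotone (Δ_[1] fun n : ℕ => n * c / (a + n * c)) := by
  set E : ℕ → ℝ := fun n => a + n * c with hE
  have hEpos (n : ℕ) : 0 < E n := by positivity
  have hΔE : Δ_[1] E = fun _ => c := by
    ext
    simp only [hE, fwdDiff]
    push_cast
    ring
  have hsplit : (fun n : ℕ => n * c / (a + n * c)) = (fun _ => 1) + (-a) • E⁻¹ := by
    ext n
    have := hEpos n
    simp only [hE, Pi.add_apply, Pi.smul_apply, Pi.inv_apply, smul_eq_mul] at this ⊢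
    field_simp
    ring
  rw [hsplit, fwdDiff_add, fwdDiff_const, ← Pi.zero_def, zero_add, fwdDiff_const_smul, neg_smul,
    ← smul_neg]
  exact (CompletelyMonotone.inv hEpos (hΔE ▸ completelyMonotone_const hc)).neg_fwdDiff.const_smul
    ha.le

lemma integrableOn_mul_div_rpow_add {β c : ℝ} (hβ : 2 < β) (hc : 0 ≤ c) :
    IntegrableOn (fun u => c * u / (u ^ β + c)) (Set.Ioi 0) := by
  obtain rfl | hc := hc.eq_or_lt
  · simp
  have hcont : ContinuousOn (fun u : ℝ => c * u / (u ^ β + c)) (Set.Ici 0) := by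
    refine (continuousOn_const.mul continuousOn_id).div
      ((continuousOn_id.rpow_const fun _ _ => Or.inr (by linarith)).add continuousOn_const) ?_
    intro u hu
    exact (add_pos_of_nonneg_of_pos (Real.rpow_nonneg hu β) hc).ne'
  rw [← Set.Ioc_union_Ioi_eq_Ioi zero_le_one, integrableOn_union]
  refine ⟨(hcont.mono Set.Icc_subset_Ici_self).integrableOn_Icc.mono_set Set.Ioc_subset_Icc_self,
    ?_⟩
  -- on `(1, ∞)` the integrand is at most `c u ^ (1 - β)`, and `1 - β < -1`
  refine Integrable.mono'
    ((integrableOn_Ioi_rpow_of_lt (a := 1 - β) (by linarith) one_pos).const_mul c)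
    ((hcont.mono fun u (hu : 1 < u) => (one_pos.trans hu).le).aestronglyMeasurable
      measurableSet_Ioi)
    ((ae_restrict_iff' measurableSet_Ioi).2 (ae_of_all _ fun u (hu : 1 < u) => ?_))
  have hu : 0 < u := one_pos.trans hu
  have huβ : 0 < u ^ β := Real.rpow_pos_of_pos hu β
  rw [Real.norm_of_nonneg (by positivity), Real.rpow_sub hu, Real.rpow_one, ← mul_div_assoc]
  exact div_le_div_of_nonneg_left (by positivity) huβ (by linarith)

section Theta

variable {β τ α : ℝ}

lemma integrableOn_theta_integrand (hβ : 2 < β) (hατ : 0 ≤ α * τ) (n : ℕ) :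
    IntegrableOn (fun u => (n : ℝ) * α * τ * u / (u ^ β + n * α * τ)) (Set.Ioi 0) :=
  integrableOn_mul_div_rpow_add hβ (by rw [mul_assoc]; exact mul_nonneg n.cast_nonneg hατ)

lemma thetaA_add_thetaC (hβ : 2 < β) (hατ : 0 ≤ α * τ) (n : ℕ) :
    thetaA β τ α n + thetaC β τ α n
      = 1 + 2 * ∫ u in Set.Ioi 1, (n : ℝ) * α * τ * u / (u ^ β + n * α * τ) := by
  have hint := integrableOn_theta_integrand hβ hατ n
  rw [thetaA, thetaC, ← intervalIntegral.integral_interval_add_Ioi hint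
    (hint.mono_set (Set.Ioi_subset_Ioi zero_le_one))]
  ring

lemma completelyMonotone_fwdDiff_setIntegral_theta_integrand (hβ : 2 < β) (hατ : 0 < α * τ)
    {S : Set ℝ} (hS : S ⊆ Set.Ioi 0) (hSm : MeasurableSet S) :
    CompletelyMonotone
      (Δ_[1] fun n : ℕ => ∫ u in S, (n : ℝ) * α * τ * u / (u ^ β + n * α * τ)) := by
  refine completelyMonotone_fwdDiff_integral
    (fun n => (integrableOn_theta_integrand hβ hατ.le n).mono_set hS)
    ((ae_restrict_iff' hSm).2 (ae_of_all _ fun u hu => ?_))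
  have hu : 0 < u := hS hu
  have hscale : (fun n : ℕ => (n : ℝ) * α * τ * u / (u ^ β + n * α * τ))
      = u • fun n : ℕ => n * (α * τ) / (u ^ β + n * (α * τ)) := by
    ext n
    simp only [Pi.smul_apply, smul_eq_mul]
    ring
  rw [hscale, fwdDiff_const_smul]
  exact (completelyMonotone_fwdDiff_mul_div_add (Real.rpow_pos_of_pos hu β) hατ.le).const_smul
    hu.le

end Theta

theorem Pu_monotoneOn_general (β τ : ℝ) (hβ : 2 < β) (hτ : 0 < τ) (N : ℕ)
    (α : ℝ) (hα : α = (N.factorial : ℝ) ^ (-(1 : ℝ) / (N : ℝ))) :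
    MonotoneOn (Pu β τ α N) (Set.Icc 0 1) := by
  have hατ : 0 < α * τ := mul_pos (hα ▸ Real.rpow_pos_of_pos (by positivity) _) hτ
  refine monotoneOn_sum_Icc_neg_one_pow_succ_mul_choose_mul_div (by simp [thetaA])
    (by simp [thetaC]) ?_ ?_ N
  · have hC : thetaC β τ α
        = (2 : ℝ) • fun n : ℕ => ∫ u in Set.Ioi 0, (n : ℝ) * α * τ * u / (u ^ β + n * α * τ) :=
      rfl
    rw [hC, fwdDiff_const_smul]
    exact (completelyMonotone_fwdDiff_setIntegral_theta_integrand hβ hατ subset_rfl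
      measurableSet_Ioi).const_smul zero_le_two
  · have hAC : thetaA β τ α + thetaC β τ α = (fun _ => 1)
        + (2 : ℝ) • fun n : ℕ => ∫ u in Set.Ioi 1, (n : ℝ) * α * τ * u / (u ^ β + n * α * τ) :=
      funext (thetaA_add_thetaC hβ hατ.le)
    rw [hAC, fwdDiff_add, fwdDiff_const, ← Pi.zero_def, zero_add, fwdDiff_const_smul]
    exact (completelyMonotone_fwdDiff_setIntegral_theta_integrand hβ hατ
      (Set.Ioi_subset_Ioi zero_le_one) measurableSet_Ioi).const_smul zero_le_two

/-- **The paper's Lemma 4/Lemma 5**: with `α = (N!)^{−1/N}`, the upper-bound STP of a cached file,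
`t ↦ P_u(t)`, is monotone nondecreasing on `[0,1]`. -/
theorem Pu_monotoneOn (β τ : ℝ) (hβ : 2 < β) (hτ : 0 < τ) (N : ℕ) (hN : 1 ≤ N)
    (α : ℝ) (hα : α = (N.factorial : ℝ) ^ (-(1 : ℝ) / (N : ℝ))) :
    MonotoneOn (Pu β τ α N) (Set.Icc 0 1) :=
  Pu_monotoneOn_general β τ hβ hτ N α hα
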